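/- arXiv:2411.06240 — 7 statements merged into one kernel-verified Lean document; each statement's English description precedes it below -/
import Mathlib

section
/- A risk-sharing rule C is the uniform risk-sharing rule (i.e., C_i[X] = S_X / n for all i and all pools X, where S_X = ∑_k X_k) if and only if C satisfies the reshuffling property and has source-anonymous contributions. -/
open MeasureTheory

/-- A risk-sharing rule `C` is the uniform RS rule iff it satisfies the
reshuffling property and has source-anonymous contributions. -/
theorem stmt_1
    {Ω : Type*} [MeasurableSpace Ω] (μ : Measure Ω) [IsProbabilityMeasure μ]
    {n : ℕ} (hn : 1 ≤ n)
    (χ : Set (Ω → ℝ))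
    (hχnonneg : ∀ f ∈ χ, ∀ ω, (0:ℝ) ≤ f ω)
    (C : (Fin n → Ω → ℝ) → Fin n → Ω → ℝ)
    (hfull : ∀ X : Fin n → Ω → ℝ, (∀ i, X i ∈ χ) →
      (fun ω => ∑ i, C X i ω) =ᵐ[μ] fun ω => ∑ i, X i ω) :
    (∀ X : Fin n → Ω → ℝ, (∀ i, X i ∈ χ) → ∀ i,
        C X i =ᵐ[μ] fun ω => (∑ k, X k ω) / (n : ℝ)) ↔
      ((∀ X : Fin n → Ω → ℝ, (∀ i, X i ∈ χ) → ∀ π : Equiv.Perm (Fin n), ∀ i,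
          C (fun j => X (π j)) i =ᵐ[μ] C X (π i)) ∧
        (∀ X : Fin n → Ω → ℝ, (∀ i, X i ∈ χ) → ∀ π : Equiv.Perm (Fin n), ∀ i,
          C (fun j => X (π j)) i =ᵐ[μ] C X i)) := by
  have hn0 : (n : ℝ) ≠ 0 := by positivity
  constructor
  · intro hu
    have key : ∀ X : Fin n → Ω → ℝ, (∀ i, X i ∈ χ) → ∀ π : Equiv.Perm (Fin n), ∀ i j,
        C (fun j => X (π j)) i =ᵐ[μ] C X j := by
      intro X hX π i j
      have hXπ : ∀ k, (fun j => X (π j)) k ∈ χ := fun k => hX (π k)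
      have h1 := hu _ hXπ i
      have h2 := hu X hX j
      refine h1.trans (Filter.EventuallyEq.trans ?_ h2.symm)
      refine Filter.EventuallyEq.of_eq ?_
      funext ω
      congr 1
      exact Equiv.sum_comp π (fun k => X k ω)
    exact ⟨fun X hX π i => key X hX π i (π i), fun X hX π i => key X hX π i i⟩
  · rintro ⟨h1, h2⟩ X hX i
    have heq : ∀ j, C X j =ᵐ[μ] C X i := by
      intro j
      have ha := h1 X hX (Equiv.swap i j) i
      have hb := h2 X hX (Equiv.swap i j) i
      have hc : C X j =ᵐ[μ] C X (Equiv.swap i j i) := by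
        rw [Equiv.swap_apply_left]
      exact hc.trans (ha.symm.trans hb)
    have hsum : (fun ω => ∑ k, C X k ω) =ᵐ[μ] fun ω => (n : ℝ) * C X i ω := by
      have := Filter.eventually_all.2 heq
      filter_upwards [this] with ω hω
      rw [Finset.sum_congr rfl (fun k _ => hω k), Finset.sum_const, Finset.card_univ,
        Fintype.card_fin, nsmul_eq_mul]
    have hfin := (hsum.symm.trans (hfull X hX))
    filter_upwards [hfin] with ω hω
    field_simp
    linarith [hω]
end

section
/- A risk-sharing rule C is the uniform risk-sharing rule (C_i[X] = S_X/n for all i and all pools X) if and only if C satisfies the reshuffling property and has strongly aggregate contributions. -/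
open MeasureTheory

/-- A risk-sharing rule `C` is the uniform RS rule iff it satisfies the
reshuffling property and has strongly aggregate contributions. -/
theorem stmt_3
    {Ω : Type*} [MeasurableSpace Ω] (μ : Measure Ω) [IsProbabilityMeasure μ]
    {n : ℕ} (hn : 1 ≤ n)
    (χ : Set (Ω → ℝ))
    (hχnonneg : ∀ f ∈ χ, ∀ ω, (0:ℝ) ≤ f ω)
    (hχzero : (fun _ : Ω => (0:ℝ)) ∈ χ)
    (hχadd : ∀ f g : Ω → ℝ, f ∈ χ → g ∈ χ → (fun ω => f ω + g ω) ∈ χ)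
    (C : (Fin n → Ω → ℝ) → Fin n → Ω → ℝ)
    (hfull : ∀ X : Fin n → Ω → ℝ, (∀ i, X i ∈ χ) →
      (fun ω => ∑ i, C X i ω) =ᵐ[μ] fun ω => ∑ i, X i ω) :
    (∀ X : Fin n → Ω → ℝ, (∀ i, X i ∈ χ) → ∀ i,
        C X i =ᵐ[μ] fun ω => (∑ k, X k ω) / (n : ℝ)) ↔
      ((∀ X : Fin n → Ω → ℝ, (∀ i, X i ∈ χ) → ∀ π : Equiv.Perm (Fin n), ∀ i,
          C (fun j => X (π j)) i =ᵐ[μ] C X (π i)) ∧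
        (∃ h : ℝ → Fin n → ℝ, ∀ X : Fin n → Ω → ℝ, (∀ i, X i ∈ χ) → ∀ i,
          C X i =ᵐ[μ] fun ω => h (∑ k, X k ω) i)) := by
  have hn0 : (n : ℝ) ≠ 0 := by positivity
  constructor
  · intro huni
    constructor
    · intro X hX π i
      have h1 := huni (fun j => X (π j)) (fun j => hX (π j)) i
      have h2 := huni X hX (π i)
      refine h1.trans ((Filter.EventuallyEq.of_eq ?_).trans h2.symm)
      funext ω
      simp [Equiv.sum_comp π (fun k => X k ω)]
    · exact ⟨fun s _ => s / n, fun X hX i => huni X hX i⟩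
  · rintro ⟨hresh, h, hagg⟩ X hX i
    set S : Ω → ℝ := fun ω => ∑ k, X k ω with hS
    have key : ∀ j, (fun ω => h (S ω) i) =ᵐ[μ] fun ω => h (S ω) j := by
      intro j
      have h1 := hresh X hX (Equiv.swap i j) i
      have h2 := hagg (fun k => X (Equiv.swap i j k)) (fun k => hX _) i
      have h3 := hagg X hX j
      have hsum : (fun ω => h (∑ k, X (Equiv.swap i j k) ω) i)
          = fun ω => h (S ω) i := by
        funext ω
        simp [hS, Equiv.sum_comp (Equiv.swap i j) (fun k => X k ω)]
      rw [hsum] at h2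
      have hswap : C X (Equiv.swap i j i) = C X j := by rw [Equiv.swap_apply_left]
      rw [hswap] at h1
      exact h2.symm.trans (h1.trans h3)
    have hsumC : (fun ω => ∑ j, C X j ω) =ᵐ[μ] fun ω => ∑ j, h (S ω) j := by
      have hall : ∀ᵐ ω ∂μ, ∀ j, C X j ω = h (S ω) j :=
        (ae_all_iff).2 fun j => hagg X hX j
      filter_upwards [hall] with ω hω
      exact Finset.sum_congr rfl fun j _ => hω j
    have hkeyall : ∀ᵐ ω ∂μ, ∀ j, h (S ω) i = h (S ω) j := (ae_all_iff).2 key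
    have hfullX := hfull X hX
    have hCi := hagg X hX i
    filter_upwards [hkeyall, hsumC, hfullX, hCi] with ω h1 h2 h3 h4
    have hsum' : ∑ j : Fin n, h (S ω) j = S ω := by rw [← h2, h3]
    have hconst : ∑ j : Fin n, h (S ω) j = (n : ℝ) * h (S ω) i := by
      rw [Finset.sum_congr rfl fun j _ => (h1 j).symm]
      simp [Finset.sum_const, mul_comm]
    have hmul : (n : ℝ) * h (S ω) i = S ω := by rw [← hconst, hsum']
    rw [h4]
    show h (S ω) i = S ω / n
    rw [eq_div_iff hn0]
    linarith [hmul]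
end

section
/- If a risk-sharing rule C satisfies the reshuffling property and has source-anonymous contribution-over-q ratios with respect to a risk metric q : χ → ℝ≥0, then for every pool X with q[X_j] > 0 for at least one j, the contributions are C_i[X] = (q[X_i] / ∑_k q[X_k]) · S_X for all i; i.e., C coincides with the q-proportional rule on such pools. -/
open MeasureTheory

/-- If a risk-sharing rule `C` satisfies the reshuffling property and has
source-anonymous contribution-over-`q` ratios, then on every pool with at least one
positive `q`-value, `C` coincides with the `q`-proportional rule. -/
theorem stmt_7
    {Ω : Type*} [MeasurableSpace Ω] (μ : Measure Ω) [IsProbabilityMeasure μ]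
    {n : ℕ} (hn : 1 ≤ n)
    (χ : Set (Ω → ℝ))
    (hχnonneg : ∀ f ∈ χ, ∀ ω, (0:ℝ) ≤ f ω)
    (q : (Ω → ℝ) → ℝ) (hq : ∀ f ∈ χ, 0 ≤ q f)
    (C : (Fin n → Ω → ℝ) → Fin n → Ω → ℝ)
    (hfull : ∀ X : Fin n → Ω → ℝ, (∀ i, X i ∈ χ) →
      (fun ω => ∑ i, C X i ω) =ᵐ[μ] fun ω => ∑ i, X i ω)
    (hresh : ∀ X : Fin n → Ω → ℝ, (∀ i, X i ∈ χ) → ∀ π : Equiv.Perm (Fin n), ∀ i,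
      C (fun j => X (π j)) i =ᵐ[μ] C X (π i))
    (hratio : ∀ X : Fin n → Ω → ℝ, (∀ i, X i ∈ χ) → ∀ π : Equiv.Perm (Fin n), ∀ i,
      0 < q (X i) →
        C (fun j => X (π j)) i =ᵐ[μ] fun ω => (q (X (π i)) / q (X i)) * C X i ω) :
    ∀ X : Fin n → Ω → ℝ, (∀ i, X i ∈ χ) → (∃ j, 0 < q (X j)) → ∀ i,
      C X i =ᵐ[μ] fun ω => (q (X i) / ∑ k, q (X k)) * ∑ k, X k ω := by
  intro X hX hj i
  obtain ⟨j0, hj0⟩ := hj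
  have key : ∀ j, C X j =ᵐ[μ] fun ω => (q (X j) / q (X j0)) * C X j0 ω := by
    intro j
    have h1 := hresh X hX (Equiv.swap j0 j) j0
    have h2 := hratio X hX (Equiv.swap j0 j) j0 hj0
    have hs : Equiv.swap j0 j j0 = j := Equiv.swap_apply_left j0 j
    rw [hs] at h1
    exact h1.symm.trans (by simpa [hs] using h2)
  have hsum : 0 < ∑ k, q (X k) :=
    Finset.sum_pos' (fun k _ => hq _ (hX k)) ⟨j0, Finset.mem_univ _, hj0⟩
  have hall : ∀ᵐ ω ∂μ, ∀ j, C X j ω = (q (X j) / q (X j0)) * C X j0 ω :=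
    (MeasureTheory.ae_all_iff).2 key
  filter_upwards [hall, hfull X hX] with ω h1 h2
  have hqj0 : q (X j0) ≠ 0 := ne_of_gt hj0
  have hsne : (∑ k, q (X k)) ≠ 0 := ne_of_gt hsum
  have hcalc : (∑ k, q (X k)) / q (X j0) * C X j0 ω = ∑ k, X k ω := by
    rw [← h2]
    calc (∑ k, q (X k)) / q (X j0) * C X j0 ω
        = ∑ k, q (X k) / q (X j0) * C X j0 ω := by
          rw [Finset.sum_div, Finset.sum_mul]
      _ = ∑ k, C X k ω := Finset.sum_congr rfl (fun k _ => (h1 k).symm)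
  have hC : C X j0 ω = q (X j0) / (∑ k, q (X k)) * ∑ k, X k ω := by
    field_simp at hcalc ⊢
    linarith
  show C X i ω = (q (X i) / ∑ k, q (X k)) * ∑ k, X k ω
  rw [h1 i, hC]
  field_simp
end

section
/- Let q : χ → ℝ≥0 be normalized (q[0] = 0) and additive (q[∑_k X_k] = ∑_k q[X_k] for all pools X). If a risk-sharing rule C has strongly aggregate contribution-over-q ratios, then C is the q-proportional rule: for every pool X with q[X_j] > 0 for some j, C_i[X] = (q[X_i] / ∑_k q[X_k]) · S_X for all i. -/
/-!
Feed the rule the degenerate pool that puts the whole aggregate risk `S` on participant `i`.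
All other participants have `q`-value `0`, so they contribute nothing, and full allocation gives
`q[S] · hᵢ(S, q[S]) = S`. Hence `hᵢ(S, q[S]) = S / q[S]`, and since `hᵢ` depends on the pool
only through `S` and `q[S] = ∑ₖ q[Xₖ]`, every pool with aggregate `S` is shared `q`-proportionally.
-/

open MeasureTheory

section

variable {Ω ι : Type*}

def HasStronglyAggregateRatios [Fintype ι] [MeasurableSpace Ω] (μ : Measure Ω) (χ : Set (Ω → ℝ))
    (q : (Ω → ℝ) → ℝ) (C : (ι → Ω → ℝ) → ι → Ω → ℝ) (h : ℝ → ℝ → ι → ℝ) : Prop :=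
  ∀ X : ι → Ω → ℝ, (∀ i, X i ∈ χ) → (∃ j, 0 < q (X j)) → ∀ i,
    C X i =ᵐ[μ] fun ω => q (X i) * h (∑ k, X k ω) (q (fun ω' => ∑ k, X k ω')) i

theorem sum_apply_mem [Fintype ι] {χ : Set (Ω → ℝ)} (hχzero : (fun _ : Ω => (0:ℝ)) ∈ χ)
    (hχadd : ∀ f g : Ω → ℝ, f ∈ χ → g ∈ χ → (fun ω => f ω + g ω) ∈ χ)
    {X : ι → Ω → ℝ} (hX : ∀ i, X i ∈ χ) : (fun ω => ∑ k, X k ω) ∈ χ := by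
  have : ∑ k, X k ∈ χ := Finset.sum_induction X (· ∈ χ) hχadd hχzero fun k _ => hX k
  simpa only [Finset.sum_fn] using this

theorem pi_single_mem [DecidableEq ι] {χ : Set (Ω → ℝ)} (hχzero : (fun _ : Ω => (0:ℝ)) ∈ χ)
    {S : Ω → ℝ} (hS : S ∈ χ) (i k : ι) :
    (Pi.single i S : ι → Ω → ℝ) k ∈ χ := by
  rcases eq_or_ne k i with rfl | hk
  · simpa using hS
  · rw [Pi.single_eq_of_ne hk]
    exact hχzero

theorem sum_pi_single_apply [Fintype ι] [DecidableEq ι] (i : ι) (S : Ω → ℝ) (ω : Ω) :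
    ∑ k, (Pi.single i S : ι → Ω → ℝ) k ω = S ω := by
  rw [← Finset.sum_apply, Finset.sum_pi_single', if_pos (Finset.mem_univ i)]

theorem HasStronglyAggregateRatios.ae_mul_ratio_eq [Fintype ι] [DecidableEq ι]
    [MeasurableSpace Ω] {μ : Measure Ω} {χ : Set (Ω → ℝ)} {q : (Ω → ℝ) → ℝ}
    {C : (ι → Ω → ℝ) → ι → Ω → ℝ} {h : ℝ → ℝ → ι → ℝ}
    (hC : HasStronglyAggregateRatios μ χ q C h)
    (hfull : ∀ X : ι → Ω → ℝ, (∀ i, X i ∈ χ) →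
      (fun ω => ∑ i, C X i ω) =ᵐ[μ] fun ω => ∑ i, X i ω)
    (hχzero : (fun _ : Ω => (0:ℝ)) ∈ χ) (hqzero : q (fun _ => 0) = 0)
    {S : Ω → ℝ} (hS : S ∈ χ) (hqS : 0 < q S) (i : ι) :
    ∀ᵐ ω ∂μ, q S * h (S ω) (q S) i = S ω := by
  set Y : ι → Ω → ℝ := Pi.single i S
  have hYi : Y i = S := Pi.single_eq_same (M := fun _ => Ω → ℝ) i S
  have hY0 : ∀ k ≠ i, Y k = fun _ => 0 := fun k hk =>
    Pi.single_eq_of_ne (M := fun _ => Ω → ℝ) hk S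
  have hY : ∀ k, Y k ∈ χ := pi_single_mem hχzero hS i
  have hYsum : ∀ ω, ∑ k, Y k ω = S ω := sum_pi_single_apply i S
  have hratios := ae_all_iff.2 (hC Y hY ⟨i, hYi ▸ hqS⟩)
  filter_upwards [hfull Y hY, hratios] with ω hbudget hCY
  simp only [hYsum] at hbudget hCY
  calc q S * h (S ω) (q S) i = ∑ k, C Y k ω := by
        rw [Fintype.sum_eq_single i fun k hk => by rw [hCY k, hY0 k hk, hqzero, zero_mul], hCY i,
          hYi]
    _ = S ω := hbudget

end

theorem stmt_9_general
    {Ω : Type*} [MeasurableSpace Ω] (μ : Measure Ω)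
    {n : ℕ}
    (χ : Set (Ω → ℝ))
    (hχzero : (fun _ : Ω => (0:ℝ)) ∈ χ)
    (hχadd : ∀ f g : Ω → ℝ, f ∈ χ → g ∈ χ → (fun ω => f ω + g ω) ∈ χ)
    (q : (Ω → ℝ) → ℝ) (hq : ∀ f ∈ χ, 0 ≤ q f)
    (hqzero : q (fun _ => 0) = 0)
    (hqadd : ∀ X : Fin n → Ω → ℝ, (∀ i, X i ∈ χ) →
      q (fun ω => ∑ k, X k ω) = ∑ k, q (X k))
    (C : (Fin n → Ω → ℝ) → Fin n → Ω → ℝ)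
    (hfull : ∀ X : Fin n → Ω → ℝ, (∀ i, X i ∈ χ) →
      (fun ω => ∑ i, C X i ω) =ᵐ[μ] fun ω => ∑ i, X i ω)
    (hstrong : ∃ h : ℝ → ℝ → Fin n → ℝ, ∀ X : Fin n → Ω → ℝ, (∀ i, X i ∈ χ) →
      (∃ j, 0 < q (X j)) → ∀ i,
        C X i =ᵐ[μ] fun ω =>
          q (X i) * h (∑ k, X k ω) (q (fun ω' => ∑ k, X k ω')) i) :
    ∀ X : Fin n → Ω → ℝ, (∀ i, X i ∈ χ) → (∃ j, 0 < q (X j)) → ∀ i,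
      C X i =ᵐ[μ] fun ω => (q (X i) / ∑ k, q (X k)) * ∑ k, X k ω := by
  obtain ⟨h, hh⟩ := hstrong
  intro X hX ⟨j, hj⟩ i
  have hqS : q (fun ω => ∑ k, X k ω) = ∑ k, q (X k) := hqadd X hX
  have hqSpos : 0 < ∑ k, q (X k) :=
    hj.trans_le (Finset.single_le_sum (fun k _ => hq _ (hX k)) (Finset.mem_univ j))
  have hkey := HasStronglyAggregateRatios.ae_mul_ratio_eq hh hfull hχzero hqzero
    (sum_apply_mem hχzero hχadd hX) (hqS ▸ hqSpos) i
  filter_upwards [hh X hX ⟨j, hj⟩ i, hkey] with ω hCX hkey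
  rw [hqS] at hkey
  rw [hCX, hqS, div_mul_eq_mul_div, eq_div_iff hqSpos.ne']
  linear_combination q (X i) * hkey

/-- Let `q` be normalized (`q[0] = 0`) and additive. If a risk-sharing rule
`C` has strongly aggregate contribution-over-`q` ratios, then `C` is the
`q`-proportional rule. -/
theorem stmt_9
    {Ω : Type*} [MeasurableSpace Ω] (μ : Measure Ω) [IsProbabilityMeasure μ]
    {n : ℕ} (hn : 1 ≤ n)
    (χ : Set (Ω → ℝ))
    (hχnonneg : ∀ f ∈ χ, ∀ ω, (0:ℝ) ≤ f ω)
    (hχzero : (fun _ : Ω => (0:ℝ)) ∈ χ)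
    (hχadd : ∀ f g : Ω → ℝ, f ∈ χ → g ∈ χ → (fun ω => f ω + g ω) ∈ χ)
    (q : (Ω → ℝ) → ℝ) (hq : ∀ f ∈ χ, 0 ≤ q f)
    (hqzero : q (fun _ => 0) = 0)
    (hqadd : ∀ X : Fin n → Ω → ℝ, (∀ i, X i ∈ χ) →
      q (fun ω => ∑ k, X k ω) = ∑ k, q (X k))
    (C : (Fin n → Ω → ℝ) → Fin n → Ω → ℝ)
    (hfull : ∀ X : Fin n → Ω → ℝ, (∀ i, X i ∈ χ) →
      (fun ω => ∑ i, C X i ω) =ᵐ[μ] fun ω => ∑ i, X i ω)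
    (hstrong : ∃ h : ℝ → ℝ → Fin n → ℝ, ∀ X : Fin n → Ω → ℝ, (∀ i, X i ∈ χ) →
      (∃ j, 0 < q (X j)) → ∀ i,
        C X i =ᵐ[μ] fun ω =>
          q (X i) * h (∑ k, X k ω) (q (fun ω' => ∑ k, X k ω')) i) :
    ∀ X : Fin n → Ω → ℝ, (∀ i, X i ∈ χ) → (∃ j, 0 < q (X j)) → ∀ i,
      C X i =ᵐ[μ] fun ω => (q (X i) / ∑ k, q (X k)) * ∑ k, X k ω :=
  stmt_9_general μ χ hχzero hχadd q hq hqzero hqadd C hfull hstrong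
end

section
/- If a risk-sharing rule C satisfies the reshuffling property and has source-anonymous (q1,q2)-standardized contributions, then C is the (q1,q2)-based linear rule: for every pool X with ∑_k q2[X_k, S_X] ≠ 0, C_i[X] = q1[X_i] + (q2[X_i, S_X] / ∑_k q2[X_k, S_X]) · (S_X − ∑_k q1[X_k]) for all i. -/
open MeasureTheory

/-- If a risk-sharing rule `C` satisfies the reshuffling property and has
source-anonymous `(q1,q2)`-standardized contributions, then `C` is the
`(q1,q2)`-based linear rule. -/
theorem stmt_12
    {Ω : Type*} [MeasurableSpace Ω] (μ : Measure Ω) [IsProbabilityMeasure μ]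
    {n : ℕ} (hn : 1 ≤ n)
    (χ : Set (Ω → ℝ))
    (hχnonneg : ∀ f ∈ χ, ∀ ω, (0:ℝ) ≤ f ω)
    (q1 : (Ω → ℝ) → ℝ) (hq1 : ∀ f ∈ χ, 0 ≤ q1 f)
    (q2 : (Ω → ℝ) → (Ω → ℝ) → ℝ)
    (C : (Fin n → Ω → ℝ) → Fin n → Ω → ℝ)
    (hfull : ∀ X : Fin n → Ω → ℝ, (∀ i, X i ∈ χ) →
      (fun ω => ∑ i, C X i ω) =ᵐ[μ] fun ω => ∑ i, X i ω)
    (hresh : ∀ X : Fin n → Ω → ℝ, (∀ i, X i ∈ χ) → ∀ π : Equiv.Perm (Fin n), ∀ i,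
      C (fun j => X (π j)) i =ᵐ[μ] C X (π i))
    (hanon : ∀ X : Fin n → Ω → ℝ, (∀ i, X i ∈ χ) → ∀ π : Equiv.Perm (Fin n), ∀ i,
      q2 (X i) (fun ω => ∑ k, X k ω) ≠ 0 →
        C (fun j => X (π j)) i =ᵐ[μ] fun ω =>
          q1 (X (π i)) +
            (q2 (X (π i)) (fun ω' => ∑ k, X k ω') /
                q2 (X i) (fun ω' => ∑ k, X k ω')) *
              (C X i ω - q1 (X i))) :
    ∀ X : Fin n → Ω → ℝ, (∀ i, X i ∈ χ) →
      (∑ k, q2 (X k) (fun ω => ∑ l, X l ω)) ≠ 0 → ∀ i,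
        C X i =ᵐ[μ] fun ω =>
          q1 (X i) +
            (q2 (X i) (fun ω' => ∑ k, X k ω') /
                ∑ k, q2 (X k) (fun ω' => ∑ l, X l ω')) *
              ((∑ k, X k ω) - ∑ k, q1 (X k)) := by

  intro X hX hsum i
  obtain ⟨i0, -, hq0⟩ := Finset.exists_ne_zero_of_sum_ne_zero hsum
  set q : Fin n → ℝ := fun j => q2 (X j) (fun ω => ∑ l, X l ω) with hq
  have hkey : ∀ j : Fin n, C X j =ᵐ[μ] fun ω =>
      q1 (X j) + (q j / q i0) * (C X i0 ω - q1 (X i0)) := by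
    intro j
    have h1 := hresh X hX (Equiv.swap i0 j) i0
    have h2 := hanon X hX (Equiv.swap i0 j) i0 hq0
    rw [Equiv.swap_apply_left] at h1 h2
    exact h1.symm.trans h2
  have hall : ∀ᵐ ω ∂μ, (∀ j, C X j ω =
      q1 (X j) + (q j / q i0) * (C X i0 ω - q1 (X i0))) ∧
      (∑ k, C X k ω) = ∑ k, X k ω := by
    refine ((MeasureTheory.ae_all_iff).2 hkey).and (hfull X hX)
  filter_upwards [hall] with ω hω
  obtain ⟨h1, h2⟩ := hω
  set Y : ℝ := C X i0 ω - q1 (X i0) with hY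
  have hsumeq : (∑ k, X k ω) = (∑ k, q1 (X k)) + (∑ k, q k) / q i0 * Y := by
    rw [← h2, Finset.sum_congr rfl (fun k _ => h1 k), Finset.sum_add_distrib,
      Finset.sum_div, Finset.sum_mul]
  rw [h1 i, hsumeq]
  field_simp
  ring
end

section
/- Let q1 : χ → ℝ≥0 satisfy q1[0] = 0 and be additive (q1[∑_k X_k] = ∑_k q1[X_k]), and let q2 : χ² → ℝ satisfy q2[0, Y] = 0 for all Y and be additive in its first argument (q2[∑_k X_k, Y] = ∑_k q2[X_k, Y]). If a risk-sharing rule C has strongly aggregate (q1,q2)-based standardized contributions, then C is the (q1,q2)-based linear rule: for every pool X with ∑_k q2[X_k, S_X] ≠ 0, C_i[X] = q1[X_i] + (q2[X_i, S_X]/∑_k q2[X_k, S_X]) · (S_X − ∑_k q1[X_k]). -/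
open MeasureTheory

/-!
Feed the rule the pool in which one agent holds the whole aggregate `S` and everybody else holds
`0`. The others then receive `q1[0] + q2[0, S] · h = 0`, so by full allocation the one agent
receives `S`; this forces `h(S, q1[S], q2[S, S]) = (S - q1[S]) / q2[S, S]`. Since `h` only sees
the aggregate, that value is the one used for every pool with aggregate `S`, and by additivity
`q1[S] = ∑ q1[X_k]` and `q2[S, S] = ∑ q2[X_k, S]`.
-/

theorem fun_finset_sum_mem {α ι M : Type*} [AddCommMonoid M] {χ : Set (α → M)}
    (hzero : 0 ∈ χ)
    (hadd : ∀ f g : α → M, f ∈ χ → g ∈ χ → (fun ω => f ω + g ω) ∈ χ)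
    {s : Finset ι} {X : ι → α → M} (hX : ∀ i ∈ s, X i ∈ χ) :
    (fun ω => ∑ k ∈ s, X k ω) ∈ χ := by
  let χ' : AddSubmonoid (α → M) := ⟨⟨χ, fun hf hg => hadd _ _ hf hg⟩, hzero⟩
  rw [← Finset.sum_fn]
  exact χ'.sum_mem hX

section RiskSharing

variable {Ω : Type*} [MeasurableSpace Ω] {n : ℕ}

def IsRiskSharingRule (μ : Measure Ω) (χ : Set (Ω → ℝ)) (C : (Fin n → Ω → ℝ) → Fin n → Ω → ℝ) :
    Prop :=
  ∀ X : Fin n → Ω → ℝ, (∀ i, X i ∈ χ) →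
    (fun ω => ∑ i, C X i ω) =ᵐ[μ] fun ω => ∑ i, X i ω

def HasAggregateStandardizedContributions (μ : Measure Ω) (χ : Set (Ω → ℝ))
    (q1 : (Ω → ℝ) → ℝ) (q2 : (Ω → ℝ) → (Ω → ℝ) → ℝ) (C : (Fin n → Ω → ℝ) → Fin n → Ω → ℝ)
    (h : ℝ → ℝ → ℝ → Fin n → ℝ) : Prop :=
  ∀ X : Fin n → Ω → ℝ, (∀ i, X i ∈ χ) →
    (∃ j, q2 (X j) (fun ω => ∑ k, X k ω) ≠ 0) → ∀ i,
      C X i =ᵐ[μ] fun ω =>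
        q1 (X i) +
          q2 (X i) (fun ω' => ∑ k, X k ω') *
            h (∑ k, X k ω) (q1 (fun ω' => ∑ k, X k ω'))
              (q2 (fun ω' => ∑ k, X k ω') (fun ω' => ∑ k, X k ω')) i

theorem HasAggregateStandardizedContributions.ae_aggregate_eq {μ : Measure Ω}
    {χ : Set (Ω → ℝ)} {q1 : (Ω → ℝ) → ℝ} {q2 : (Ω → ℝ) → (Ω → ℝ) → ℝ}
    {C : (Fin n → Ω → ℝ) → Fin n → Ω → ℝ} {h : ℝ → ℝ → ℝ → Fin n → ℝ}
    (hh : HasAggregateStandardizedContributions μ χ q1 q2 C h) (hC : IsRiskSharingRule μ χ C)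
    (hχzero : 0 ∈ χ) (hq1zero : q1 0 = 0) (hq2zero : ∀ Y, q2 0 Y = 0)
    {S : Ω → ℝ} (hS : S ∈ χ) (hSS : q2 S S ≠ 0) (i : Fin n) :
    ∀ᵐ ω ∂μ, q1 S + q2 S S * h (S ω) (q1 S) (q2 S S) i = S ω := by
  set Y : Fin n → Ω → ℝ := Pi.single i S
  have hY : ∀ j, Y j ∈ χ := by
    intro j
    rcases eq_or_ne j i with rfl | hj
    · simpa [Y] using hS
    · simpa [Y, hj] using hχzero
  have hYsum : ∀ ω, ∑ k, Y k ω = S ω := fun ω => by simp [Y, ← Finset.sum_apply]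
  have hYactive : ∃ j, q2 (Y j) (fun ω => ∑ k, Y k ω) ≠ 0 := ⟨i, by simpa [Y, hYsum] using hSS⟩
  have hCY := hh Y hY hYactive
  simp only [hYsum] at hCY
  have hothers : ∀ᵐ ω ∂μ, ∀ j ≠ i, C Y j ω = 0 := by
    refine ae_all_iff.2 fun j => (hCY j).mono fun ω hω hj => ?_
    simp [hω, Y, hj, hq1zero, hq2zero]
  filter_upwards [hC Y hY, hCY i, hothers] with ω hsum hCi hothers
  rw [Fintype.sum_eq_single i hothers, hCi, hYsum] at hsum
  simpa [Y] using hsum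

end RiskSharing

theorem stmt_14_general
    {Ω : Type*} [MeasurableSpace Ω] (μ : Measure Ω)
    {n : ℕ}
    (χ : Set (Ω → ℝ))
    (hχzero : (fun _ : Ω => (0:ℝ)) ∈ χ)
    (hχadd : ∀ f g : Ω → ℝ, f ∈ χ → g ∈ χ → (fun ω => f ω + g ω) ∈ χ)
    (q1 : (Ω → ℝ) → ℝ)
    (hq1zero : q1 (fun _ => 0) = 0)
    (hq1add : ∀ X : Fin n → Ω → ℝ, (∀ i, X i ∈ χ) →
      q1 (fun ω => ∑ k, X k ω) = ∑ k, q1 (X k))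
    (q2 : (Ω → ℝ) → (Ω → ℝ) → ℝ)
    (hq2zero : ∀ Y : Ω → ℝ, q2 (fun _ => 0) Y = 0)
    (hq2add : ∀ X : Fin n → Ω → ℝ, (∀ i, X i ∈ χ) → ∀ Y ∈ χ,
      q2 (fun ω => ∑ k, X k ω) Y = ∑ k, q2 (X k) Y)
    (C : (Fin n → Ω → ℝ) → Fin n → Ω → ℝ)
    (hfull : ∀ X : Fin n → Ω → ℝ, (∀ i, X i ∈ χ) →
      (fun ω => ∑ i, C X i ω) =ᵐ[μ] fun ω => ∑ i, X i ω)
    (hstrong : ∃ h : ℝ → ℝ → ℝ → Fin n → ℝ,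
      ∀ X : Fin n → Ω → ℝ, (∀ i, X i ∈ χ) →
        (∃ j, q2 (X j) (fun ω => ∑ k, X k ω) ≠ 0) → ∀ i,
          C X i =ᵐ[μ] fun ω =>
            q1 (X i) +
              q2 (X i) (fun ω' => ∑ k, X k ω') *
                h (∑ k, X k ω) (q1 (fun ω' => ∑ k, X k ω'))
                  (q2 (fun ω' => ∑ k, X k ω') (fun ω' => ∑ k, X k ω')) i) :
    ∀ X : Fin n → Ω → ℝ, (∀ i, X i ∈ χ) →
      (∑ k, q2 (X k) (fun ω => ∑ l, X l ω)) ≠ 0 → ∀ i,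
        C X i =ᵐ[μ] fun ω =>
          q1 (X i) +
            (q2 (X i) (fun ω' => ∑ k, X k ω') /
                ∑ k, q2 (X k) (fun ω' => ∑ l, X l ω')) *
              ((∑ k, X k ω) - ∑ k, q1 (X k)) := by
  obtain ⟨h, hh⟩ := hstrong
  intro X hX hQ i
  set S : Ω → ℝ := fun ω => ∑ k, X k ω
  have hS : S ∈ χ := fun_finset_sum_mem hχzero hχadd fun k _ => hX k
  have hq1S : q1 S = ∑ k, q1 (X k) := hq1add X hX
  have hq2S : q2 S S = ∑ k, q2 (X k) S := hq2add X hX S hS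
  have hSS : q2 S S ≠ 0 := hq2S ▸ hQ
  obtain ⟨j, -, hj⟩ := Finset.exists_ne_zero_of_sum_ne_zero hQ
  filter_upwards [hh X hX ⟨j, hj⟩ i,
    HasAggregateStandardizedContributions.ae_aggregate_eq hh hfull hχzero hq1zero hq2zero hS hSS i]
    with ω hC hagg
  have hcoef : h (S ω) (q1 S) (q2 S S) i = (S ω - q1 S) / q2 S S :=
    eq_div_of_mul_eq hSS (by linarith)
  rw [hC, hcoef, hq1S, hq2S]
  ring

/-- Let `q1` be normalized and additive and let `q2` vanish at `0` and be
additive in its first argument. If a risk-sharing rule `C` has strongly aggregate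
`(q1,q2)`-based standardized contributions, then `C` is the `(q1,q2)`-based linear
rule. -/
theorem stmt_14
    {Ω : Type*} [MeasurableSpace Ω] (μ : Measure Ω) [IsProbabilityMeasure μ]
    {n : ℕ} (hn : 1 ≤ n)
    (χ : Set (Ω → ℝ))
    (hχnonneg : ∀ f ∈ χ, ∀ ω, (0:ℝ) ≤ f ω)
    (hχzero : (fun _ : Ω => (0:ℝ)) ∈ χ)
    (hχadd : ∀ f g : Ω → ℝ, f ∈ χ → g ∈ χ → (fun ω => f ω + g ω) ∈ χ)
    (q1 : (Ω → ℝ) → ℝ) (hq1 : ∀ f ∈ χ, 0 ≤ q1 f)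
    (hq1zero : q1 (fun _ => 0) = 0)
    (hq1add : ∀ X : Fin n → Ω → ℝ, (∀ i, X i ∈ χ) →
      q1 (fun ω => ∑ k, X k ω) = ∑ k, q1 (X k))
    (q2 : (Ω → ℝ) → (Ω → ℝ) → ℝ)
    (hq2zero : ∀ Y : Ω → ℝ, q2 (fun _ => 0) Y = 0)
    (hq2add : ∀ X : Fin n → Ω → ℝ, (∀ i, X i ∈ χ) → ∀ Y ∈ χ,
      q2 (fun ω => ∑ k, X k ω) Y = ∑ k, q2 (X k) Y)
    (C : (Fin n → Ω → ℝ) → Fin n → Ω → ℝ)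
    (hfull : ∀ X : Fin n → Ω → ℝ, (∀ i, X i ∈ χ) →
      (fun ω => ∑ i, C X i ω) =ᵐ[μ] fun ω => ∑ i, X i ω)
    (hstrong : ∃ h : ℝ → ℝ → ℝ → Fin n → ℝ,
      ∀ X : Fin n → Ω → ℝ, (∀ i, X i ∈ χ) →
        (∃ j, q2 (X j) (fun ω => ∑ k, X k ω) ≠ 0) → ∀ i,
          C X i =ᵐ[μ] fun ω =>
            q1 (X i) +
              q2 (X i) (fun ω' => ∑ k, X k ω') *
                h (∑ k, X k ω) (q1 (fun ω' => ∑ k, X k ω'))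
                  (q2 (fun ω' => ∑ k, X k ω') (fun ω' => ∑ k, X k ω')) i) :
    ∀ X : Fin n → Ω → ℝ, (∀ i, X i ∈ χ) →
      (∑ k, q2 (X k) (fun ω => ∑ l, X l ω)) ≠ 0 → ∀ i,
        C X i =ᵐ[μ] fun ω =>
          q1 (X i) +
            (q2 (X i) (fun ω' => ∑ k, X k ω') /
                ∑ k, q2 (X k) (fun ω' => ∑ l, X l ω')) *
              ((∑ k, X k ω) - ∑ k, q1 (X k)) :=
  stmt_14_general μ χ hχzero hχadd q1 hq1zero hq1add q2 hq2zero hq2add C hfull hstrong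
end

section
/- The weighted q-proportional rule C_i[X] = (w_i q[X_i] / ∑_k w_k q[X_k]) · S_X with positive weights w_1,...,w_n that are not all equal fails the reshuffling property, given suitable pools exist (e.g., χ contains two losses with distinct positive q-values). -/
open MeasureTheory

/-- The weighted `q`-proportional rule with positive, not-all-equal weights
fails the reshuffling property (given suitable pools exist). -/
theorem stmt_18
    {Ω : Type*} [MeasurableSpace Ω] (μ : Measure Ω) [IsProbabilityMeasure μ]
    {n : ℕ} (hn : 2 ≤ n)
    (χ : Set (Ω → ℝ))
    (hχnonneg : ∀ f ∈ χ, ∀ ω, (0:ℝ) ≤ f ω)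
    (w : Fin n → ℝ) (hw : ∀ i, 0 < w i) (hwne : ∃ i j, w i ≠ w j)
    (q : (Ω → ℝ) → ℝ) (hq : ∀ f ∈ χ, 0 ≤ q f)
    (X Y : Ω → ℝ) (hX : X ∈ χ) (hY : Y ∈ χ)
    (hqX : 0 < q X) (hqY : 0 < q Y) (hqXY : q X ≠ q Y)
    (hXYne : ¬ (fun ω => X ω + Y ω) =ᵐ[μ] fun _ => (0:ℝ))
    (C : (Fin n → Ω → ℝ) → Fin n → Ω → ℝ)
    (hC : ∀ W : Fin n → Ω → ℝ, ∀ i ω,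
      C W i ω = (w i * q (W i) / ∑ k, w k * q (W k)) * ∑ k, W k ω) :
    ¬ (∀ W : Fin n → Ω → ℝ, (∀ i, W i ∈ χ) → 0 < ∑ k, w k * q (W k) →
        ∀ π : Equiv.Perm (Fin n), ∀ i,
          C (fun j => W (π j)) i =ᵐ[μ] C W (π i)) := by
  intro h
  obtain ⟨i₀, j₀, hij⟩ := hwne
  have hij' : i₀ ≠ j₀ := fun e => hij (congrArg w e)
  set W : Fin n → Ω → ℝ := fun k => if k = i₀ then X else Y with hWdef
  have hWi : W i₀ = X := by simp [hWdef]
  have hWj : W j₀ = Y := by simp [hWdef, hij'.symm]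
  have hWχ : ∀ i, W i ∈ χ := by
    intro i; simp only [hWdef]; split <;> assumption
  have hqW : ∀ k, q (W k) = if k = i₀ then q X else q Y := by
    intro k; by_cases hk : k = i₀ <;> simp [hWdef, hk]
  set π : Equiv.Perm (Fin n) := Equiv.swap i₀ j₀ with hπdef
  have hπi : π i₀ = j₀ := Equiv.swap_apply_left _ _
  have hπW : ∀ k, q (W (π k)) = if k = j₀ then q X else q Y := by
    intro k
    rcases eq_or_ne k j₀ with rfl | hk
    · simp [hπdef, Equiv.swap_apply_right, hqW]
    rcases eq_or_ne k i₀ with rfl | hk'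
    · simp [hπdef, Equiv.swap_apply_left, hqW, hij'.symm, hk]
    · simp [hπdef, Equiv.swap_apply_of_ne_of_ne hk' hk, hqW, hk', hk]
  have hsum : ∀ (c d : ℝ) (m : Fin n),
      ∑ k, w k * (if k = m then c else d) = (∑ k, w k) * d + w m * (c - d) := by
    intro c d m
    have hterm : ∀ k : Fin n, w k * (if k = m then c else d)
        = w k * d + (if k = m then w m * (c - d) else 0) := by
      intro k; by_cases hk : k = m
      · subst hk; simp; ring
      · simp [hk]
    rw [Finset.sum_congr rfl fun k _ => hterm k, Finset.sum_add_distrib,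
      Finset.sum_ite_eq' Finset.univ m (fun _ => w m * (c - d)), ← Finset.sum_mul]
    simp
  set T := ∑ k, w k with hTdef
  have hTge : w i₀ + w j₀ ≤ T := by
    have hle := Finset.sum_le_sum_of_subset_of_nonneg
      (Finset.subset_univ ({i₀, j₀} : Finset (Fin n))) (fun k _ _ => (hw k).le)
    rwa [Finset.sum_pair hij'] at hle
  have hD : ∑ k, w k * q (W k) = T * q Y + w i₀ * (q X - q Y) := by
    rw [Finset.sum_congr rfl fun k _ => by rw [hqW k]]; exact hsum _ _ _
  have hD' : ∑ k, w k * q (W (π k)) = T * q Y + w j₀ * (q X - q Y) := by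
    rw [Finset.sum_congr rfl fun k _ => by rw [hπW k]]; exact hsum _ _ _
  have hDpos : 0 < T * q Y + w i₀ * (q X - q Y) := by
    nlinarith [mul_pos (hw i₀) hqX, mul_pos (hw j₀) hqY,
      mul_nonneg (by linarith : (0:ℝ) ≤ T - w i₀ - w j₀) hqY.le]
  have hD'pos : 0 < T * q Y + w j₀ * (q X - q Y) := by
    nlinarith [mul_pos (hw j₀) hqX, mul_pos (hw i₀) hqY,
      mul_nonneg (by linarith : (0:ℝ) ≤ T - w i₀ - w j₀) hqY.le]
  have hkey : w i₀ * q Y / (T * q Y + w j₀ * (q X - q Y))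
      ≠ w j₀ * q Y / (T * q Y + w i₀ * (q X - q Y)) := by
    intro heq
    rw [div_eq_div_iff hD'pos.ne' hDpos.ne'] at heq
    have hfac : q Y * (w i₀ - w j₀)
        * ((w i₀ + w j₀) * q X + (T - w i₀ - w j₀) * q Y) = 0 := by
      linear_combination heq
    have hpos2 : 0 < (w i₀ + w j₀) * q X + (T - w i₀ - w j₀) * q Y := by
      nlinarith [mul_pos (add_pos (hw i₀) (hw j₀)) hqX,
        mul_nonneg (by linarith : (0:ℝ) ≤ T - w i₀ - w j₀) hqY.le]
    exact mul_ne_zero (mul_ne_zero hqY.ne' (sub_ne_zero.mpr hij)) hpos2.ne' hfac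
  have hDsum : 0 < ∑ k, w k * q (W k) := by rw [hD]; exact hDpos
  have hae := h W hWχ hDsum π i₀
  have hfinal : (fun ω => X ω + Y ω) =ᵐ[μ] fun _ => (0:ℝ) := by
    filter_upwards [hae] with ω hω
    rw [hC, hC] at hω
    simp only [hπi] at hω
    have hS : ∑ k, W (π k) ω = ∑ k, W k ω := Equiv.sum_comp π (fun k => W k ω)
    rw [hS, hD, hD', hWj] at hω
    have hS0 : (∑ k, W k ω) = 0 := by
      by_contra hSne
      exact hkey (mul_right_cancel₀ hSne hω)
    have hXYle : X ω + Y ω ≤ ∑ k, W k ω := by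
      have hle := Finset.sum_le_sum_of_subset_of_nonneg
        (Finset.subset_univ ({i₀, j₀} : Finset (Fin n)))
        (fun k _ _ => hχnonneg _ (hWχ k) ω)
      rwa [Finset.sum_pair hij', hWi, hWj] at hle
    have h1 := hχnonneg X hX ω
    have h2 := hχnonneg Y hY ω
    linarith [hS0 ▸ hXYle]
  exact hXYne hfinal
end
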